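/- arXiv:1103.0153 — 5 statements merged into one kernel-verified Lean document; each statement's English description precedes it below -/
import Mathlib

section
/- Let R be a commutative ring and let μ_1, μ_2, μ_3, μ_{12}, μ_{13}, μ_{23}, μ_{123} ∈ R. Set k_{12} = μ_{12} − μ_1μ_2, k_{13} = μ_{13} − μ_1μ_3, k_{23} = μ_{23} − μ_2μ_3, and k_{123} = μ_{123} − μ_1μ_{23} − μ_2μ_{13} − μ_3μ_{12} + 2μ_1μ_2μ_3. Then the 2×2×2-hyperdeterminant expressed in moments satisfies the identity μ_1²μ_{23}² + μ_2²μ_{13}² + μ_3²μ_{12}² + μ_{123}² + 4(μ_1μ_2μ_3μ_{123} + μ_{12}μ_{13}μ_{23}) − 2(μ_1μ_2μ_{13}μ_{23} + μ_1μ_3μ_{12}μ_{23} + μ_2μ_3μ_{12}μ_{13} + μ_1μ_{23}μ_{123} + μ_2μ_{13}μ_{123} + μ_3μ_{12}μ_{123}) = k_{123}² + 4k_{12}k_{13}k_{23}. -/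
/-- the 2×2×2-hyperdeterminant written in moments equals
`k_{123}² + 4 k_{12} k_{13} k_{23}` in cumulants; a polynomial identity in any
commutative ring. -/
theorem hyperdet_three_in_cumulants {R : Type*} [CommRing R]
    (μ1 μ2 μ3 μ12 μ13 μ23 μ123 : R)
    (k12 k13 k23 k123 : R)
    (hk12 : k12 = μ12 - μ1 * μ2)
    (hk13 : k13 = μ13 - μ1 * μ3)
    (hk23 : k23 = μ23 - μ2 * μ3)
    (hk123 : k123 = μ123 - μ1 * μ23 - μ2 * μ13 - μ3 * μ12 + 2 * μ1 * μ2 * μ3) :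
    μ1 ^ 2 * μ23 ^ 2 + μ2 ^ 2 * μ13 ^ 2 + μ3 ^ 2 * μ12 ^ 2 + μ123 ^ 2
      + 4 * (μ1 * μ2 * μ3 * μ123 + μ12 * μ13 * μ23)
      - 2 * (μ1 * μ2 * μ13 * μ23 + μ1 * μ3 * μ12 * μ23 + μ2 * μ3 * μ12 * μ13
              + μ1 * μ23 * μ123 + μ2 * μ13 * μ123 + μ3 * μ12 * μ123)
      = k123 ^ 2 + 4 * k12 * k13 * k23 := by
  subst hk12 hk13 hk23 hk123; ring
end

section
/- Let n ≥ 1, let p : 2^[n] → ℂ be a distribution (∑_I p_I = 1), and let a, b ∈ ℂⁿ. Define the moments for states 0/1 by μ_I = ∑_{J ⊇ I} p_J, and the moments for states b_i/a_i by μ'_I = ∑_{J ⊆ [n]} p_J · ∏_{i ∈ I} (a_i if i ∈ J else b_i). Let k and k' be the cumulants of μ and μ' respectively, computed by k_I = ∑_{π ∈ Π(I)} (−1)^{|π|−1}(|π|−1)! ∏_{B ∈ π} μ_B. Then k'_I = k_I · ∏_{i ∈ I}(a_i − b_i) for every I ⊆ [n] with |I| ≥ 2, and k'_{{i}} = (a_i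 − b_i)·k_{{i}} + b_i for every i ∈ [n]. -/
/-!
Write `X'_i = b_i + (a_i - b_i) X_i`. Expanding the products, `μ'_J = ∑_{T ⊆ J} w_J(T) μ_T` with
`w_J(T) = ∏_{i ∈ J} (a_i - b_i if i ∈ T else b_i)`, and substituting this into the partition
formula gives `k'_I = ∑_{T ⊆ I} w_I(T) · k_I(μ(T ∩ ·))`. For `T ≠ I`, any `j ∈ I \ T` behaves as
the constant variable `1` under `μ(T ∩ ·)`, and a cumulant of order at least two involving a
constant vanishes: grouping the partitions of `I` by their restriction `σ` to `I \ {j}`, the point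
`j` either forms a new block or joins one of the `|σ|` blocks of `σ`, and
`(-1)^|σ| |σ|! + |σ| (-1)^(|σ|-1) (|σ|-1)! = 0`. So only `T = I` survives when `|I| ≥ 2`, while
for `I = {i}` the terms `T = {i}` and `T = ∅` remain.
-/

open Finset

/-- The cumulants of a table `μ` indexed by subsets of `[n]`. -/
noncomputable def cumulant {n : ℕ} (μ : Finset (Fin n) → ℂ) (I : Finset (Fin n)) : ℂ :=
  ∑ π : Finpartition I,
    (-1 : ℂ) ^ (π.parts.card - 1) * (Nat.factorial (π.parts.card - 1) : ℂ) *
      ∏ B ∈ π.parts, μ B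

namespace Finpartition

variable {α : Type*} [DecidableEq α] {s : Finset α} {a : α}

lemma prod_prod_parts {M : Type*} [CommMonoid M] (π : Finpartition s) (f : α → M) :
    ∏ B ∈ π.parts, ∏ i ∈ B, f i = ∏ i ∈ s, f i := by
  simpa [π.biUnion_parts] using (prod_biUnion (f := f) π.disjoint).symm

lemma prod_sum_powerset {R : Type*} [CommSemiring R] (π : Finpartition s)
    (f : Finset α → Finset α → R) :
    ∏ B ∈ π.parts, ∑ T ∈ B.powerset, f B T = ∑ T ∈ s.powerset, ∏ B ∈ π.parts, f B (T ∩ B) := by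
  rw [prod_sum]
  have inter_biUnion : ∀ g ∈ π.parts.pi powerset, ∀ B (hB : B ∈ π.parts),
      (π.parts.attach.biUnion fun C => g C.1 C.2) ∩ B = g B hB := by
    intro g hg B hB
    have hgsub : ∀ C (hC : C ∈ π.parts), g C hC ⊆ C := fun C hC => mem_powerset.1 (mem_pi.1 hg C hC)
    ext x
    simp only [mem_inter, mem_biUnion, mem_attach, true_and, Subtype.exists]
    constructor
    · rintro ⟨⟨C, hC, hx⟩, hxB⟩
      obtain rfl := π.eq_of_mem_parts hC hB (hgsub C hC hx) hxB
      exact hx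
    · exact fun hx => ⟨⟨B, hB, hx⟩, hgsub B hB hx⟩
  refine sum_bij' (fun g _ => π.parts.attach.biUnion fun C => g C.1 C.2) (fun T _ B _ => T ∩ B)
    (fun g hg => mem_powerset.2 (biUnion_subset.2 fun C _ =>
      (mem_powerset.1 (mem_pi.1 hg C.1 C.2)).trans (π.le C.2)))
    (fun T _ => mem_pi.2 fun B _ => mem_powerset.2 inter_subset_right)
    (fun g hg => funext₂ fun B hB => inter_biUnion g hg B hB) ?_ fun g hg => ?_
  · intro T hT
    ext x
    simp only [mem_biUnion, mem_attach, true_and, Subtype.exists, mem_inter]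
    exact ⟨fun ⟨_, _, hx, _⟩ => hx, fun hx =>
      let ⟨C, hC, hxC⟩ := π.exists_mem (mem_powerset.1 hT hx); ⟨C, hC, hx, hxC⟩⟩
  · rw [← prod_attach π.parts]
    exact prod_congr rfl fun B _ => by rw [inter_biUnion g hg B.1 B.2]

lemma subset_of_mem_insert_empty {σ : Finpartition s} {B : Finset α} (hB : B ∈ insert ∅ σ.parts) :
    B ⊆ s := by
  rcases mem_insert.1 hB with rfl | hB
  exacts [empty_subset s, σ.le hB]

/-- Put `a` into the part `B` of `σ`, or into a new singleton part when `B = ∅`. -/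
def insertInto (ha : a ∉ s) (σ : Finpartition s) {B : Finset α} (hB : B ∈ insert ∅ σ.parts) :
    Finpartition (insert a s) where
  parts := insert (insert a B) (σ.parts.erase B)
  supIndep := by
    rw [supIndep_iff_pairwiseDisjoint, coe_insert]
    refine (σ.disjoint.subset (coe_subset.2 (erase_subset _ _))).insert fun C hC _ => ?_
    obtain ⟨hCB, hC⟩ := mem_erase.1 hC
    refine disjoint_insert_left.2 ⟨fun haC => ha (σ.le hC haC), ?_⟩
    rcases mem_insert.1 hB with rfl | hB
    · exact disjoint_empty_left _
    · exact σ.disjoint hB hC hCB.symm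
  sup_parts := by
    have hBs := subset_of_mem_insert_empty hB
    ext x
    simp only [sup_insert, id, sup_eq_union, mem_union, mem_insert, mem_sup, mem_erase]
    constructor
    · rintro ((h | h) | ⟨C, ⟨-, hC⟩, hx⟩)
      exacts [.inl h, .inr (hBs h), .inr (σ.le hC hx)]
    · rintro (h | h)
      · exact .inl (.inl h)
      · obtain ⟨C, hC, hx⟩ := σ.exists_mem h
        by_cases hCB : C = B
        · exact .inl (.inr (hCB ▸ hx))
        · exact .inr ⟨C, ⟨hCB, hC⟩, hx⟩
  bot_notMem := by
    simp only [bot_eq_empty, mem_insert, mem_erase, not_or]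
    exact ⟨(insert_ne_empty a B).symm, fun h => σ.empty_notMem_parts h.2⟩

variable (ha : a ∉ s)
include ha

lemma parts_insertInto (σ : Finpartition s) {B : Finset α} (hB : B ∈ insert ∅ σ.parts) :
    (σ.insertInto ha hB).parts = insert (insert a B) (σ.parts.erase B) := rfl

lemma insert_notMem_erase_parts (σ : Finpartition s) (B : Finset α) :
    insert a B ∉ σ.parts.erase B :=
  fun h => ha (σ.le (mem_of_mem_erase h) (mem_insert_self a B))

lemma card_insertInto (σ : Finpartition s) {B : Finset α} (hB : B ∈ insert ∅ σ.parts) :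
    #(σ.insertInto ha hB).parts = #(σ.parts.erase B) + 1 :=
  card_insert_of_notMem (insert_notMem_erase_parts ha σ B)

lemma prod_insertInto {M : Type*} [CommMonoid M] (σ : Finpartition s) {B : Finset α}
    (hB : B ∈ insert ∅ σ.parts) (f : Finset α → M) :
    ∏ C ∈ (σ.insertInto ha hB).parts, f C = f (insert a B) * ∏ C ∈ σ.parts.erase B, f C :=
  prod_insert (insert_notMem_erase_parts ha σ B)

lemma erase_part_insertInto (σ : Finpartition s) {B : Finset α} (hB : B ∈ insert ∅ σ.parts) :
    ((σ.insertInto ha hB).part a).erase a = B := by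
  rw [part_eq_of_mem _ (mem_insert_self _ _) (mem_insert_self a B),
    erase_insert fun h => ha (subset_of_mem_insert_empty hB h)]

lemma mem_restrict_parts_iff (π : Finpartition (insert a s)) {C : Finset α} :
    C ∈ (π.restrict (subset_insert a s)).parts ↔ C ≠ ∅ ∧ ∃ D ∈ π.parts, D.erase a = C := by
  have hD : ∀ D ∈ π.parts, D ∩ s = D.erase a := fun D hD => by
    have hDs : D ⊆ insert a s := π.le hD
    ext x
    grind
  simp only [restrict, mem_erase, mem_image, bot_eq_empty, inf_eq_inter]
  exact and_congr_right fun _ => exists_congr fun D => and_congr_right fun h => by rw [hD D h]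

lemma restrict_insertInto (σ : Finpartition s) {B : Finset α} (hB : B ∈ insert ∅ σ.parts) :
    (σ.insertInto ha hB).restrict (subset_insert a s) = σ := by
  ext C
  have haB : a ∉ B := fun h => ha (subset_of_mem_insert_empty hB h)
  have herase : ∀ D ∈ σ.parts, D.erase a = D := fun D hD =>
    erase_eq_of_notMem fun h => ha (σ.le hD h)
  rw [mem_restrict_parts_iff ha, parts_insertInto]
  simp only [exists_mem_insert, erase_insert haB, mem_erase]
  constructor
  · rintro ⟨hC, rfl | ⟨D, ⟨-, hD⟩, rfl⟩⟩
    · exact (mem_insert.1 hB).resolve_left hC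
    · rwa [herase D hD]
  · intro hC
    refine ⟨σ.ne_empty hC, or_iff_not_imp_left.2 fun hBC => ⟨C, ⟨Ne.symm hBC, hC⟩, herase C hC⟩⟩

lemma erase_part_mem (π : Finpartition (insert a s)) :
    (π.part a).erase a ∈ insert ∅ (π.restrict (subset_insert a s)).parts := by
  by_cases h : (π.part a).erase a = ∅
  · exact h ▸ mem_insert_self _ _
  · exact mem_insert_of_mem ((mem_restrict_parts_iff ha π).2
      ⟨h, _, π.part_mem.2 (mem_insert_self a s), rfl⟩)

lemma insertInto_restrict (π : Finpartition (insert a s)) :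
    (π.restrict (subset_insert a s)).insertInto ha (erase_part_mem ha π) = π := by
  ext C
  set P := π.part a
  have haP : a ∈ P := π.mem_part (mem_insert_self a s)
  have hP : P ∈ π.parts := π.part_mem.2 (mem_insert_self a s)
  have hunique : ∀ D ∈ π.parts, a ∈ D → D = P := fun D hD haD => (π.part_eq_of_mem hD haD).symm
  rw [parts_insertInto, insert_erase haP]
  simp only [mem_insert, mem_erase, mem_restrict_parts_iff ha]
  constructor
  · rintro (rfl | ⟨hne, -, D, hD, rfl⟩)
    · exact hP
    · by_cases haD : a ∈ D
      · exact absurd (by rw [hunique D hD haD]) hne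
      · rwa [erase_eq_of_notMem haD]
  · intro hC
    refine or_iff_not_imp_left.2 fun hCP => ⟨fun hCe => ?_, π.ne_empty hC, C, hC, ?_⟩
    · exact π.ne_empty hC ((π.disjoint hC hP hCP).eq_bot_of_le (hCe ▸ erase_subset a P))
    · exact erase_eq_of_notMem fun haC => hCP (hunique C hC haC)

lemma sum_eq_sum_insertInto {M : Type*} [AddCommMonoid M] (f : Finpartition (insert a s) → M) :
    ∑ π, f π = ∑ σ : Finpartition s, ∑ B ∈ (insert ∅ σ.parts).attach, f (σ.insertInto ha B.2) := by
  symm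
  refine (sum_sigma univ (fun σ : Finpartition s => (insert ∅ σ.parts).attach)
    fun x => f (x.1.insertInto ha x.2.2)).symm.trans ?_
  refine sum_bij' (fun x _ => x.1.insertInto ha x.2.2)
    (fun π _ => ⟨π.restrict (subset_insert a s), ⟨_, erase_part_mem ha π⟩⟩)
    (fun _ _ => mem_univ _) (fun _ _ => mem_sigma.2 ⟨mem_univ _, mem_attach _ _⟩)
    (fun ⟨σ, _, hB⟩ _ =>
      Sigma.subtype_ext (restrict_insertInto ha σ hB) (erase_part_insertInto ha σ hB))
    (fun π _ => insertInto_restrict ha π) fun _ _ => rfl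

end Finpartition

section AffineMoments

variable {α R : Type*} [DecidableEq α] [CommRing R]

/-- The moments of `b_i + c_i X_i` in terms of the moments `μ` of the `X_i`. -/
def affineMoments (c b : α → R) (μ : Finset α → R) (J : Finset α) : R :=
  ∑ T ∈ J.powerset, (∏ i ∈ J, if i ∈ T then c i else b i) * μ T

lemma prod_ite_eq_sum_powerset (a b : α → R) (J K : Finset α) :
    ∏ i ∈ J, (if i ∈ K then a i else b i) =
      ∑ T ∈ J.powerset with T ⊆ K, ∏ i ∈ J, if i ∈ T then a i - b i else b i := by
  calc ∏ i ∈ J, (if i ∈ K then a i else b i)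
      = ∏ i ∈ J, ((if i ∈ K then a i - b i else 0) + b i) :=
        prod_congr rfl fun i _ => by split_ifs <;> ring
    _ = ∑ T ∈ J.powerset, (∏ i ∈ T, if i ∈ K then a i - b i else 0) * ∏ i ∈ J \ T, b i :=
        prod_add _ _ _
    _ = ∑ T ∈ J.powerset, if T ⊆ K then ∏ i ∈ J, (if i ∈ T then a i - b i else b i) else 0 := by
        refine sum_congr rfl fun T hT => ?_
        rw [prod_ite_zero, ite_mul, zero_mul, prod_ite (s := J), filter_mem_eq_inter,
          inter_eq_right.2 (mem_powerset.1 hT), ← sdiff_eq_filter]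
        rfl
    _ = _ := (sum_filter _ _).symm

lemma sum_mul_prod_ite_eq_affineMoments [Fintype α] (p : Finset α → R) (a b : α → R)
    (J : Finset α) :
    ∑ K, p K * ∏ i ∈ J, (if i ∈ K then a i else b i) =
      affineMoments (a - b) b (fun T => ∑ K with T ⊆ K, p K) J := by
  calc ∑ K, p K * ∏ i ∈ J, (if i ∈ K then a i else b i)
      = ∑ K, ∑ T ∈ J.powerset,
          if T ⊆ K then (∏ i ∈ J, if i ∈ T then (a - b) i else b i) * p K else 0 :=
        sum_congr rfl fun K _ => by
          rw [prod_ite_eq_sum_powerset, sum_filter, mul_sum]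
          exact sum_congr rfl fun T _ => by split_ifs <;> simp [mul_comm]
    _ = affineMoments (a - b) b (fun T => ∑ K with T ⊆ K, p K) J := by
        rw [sum_comm]
        exact sum_congr rfl fun T _ => by
          rw [← sum_filter, mul_sum]

lemma prod_affineMoments_parts {I : Finset α} (π : Finpartition I) (c b : α → R)
    (μ : Finset α → R) :
    ∏ B ∈ π.parts, affineMoments c b μ B =
      ∑ T ∈ I.powerset, (∏ i ∈ I, if i ∈ T then c i else b i) * ∏ B ∈ π.parts, μ (T ∩ B) := by
  simp only [affineMoments, π.prod_sum_powerset, prod_mul_distrib]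
  refine sum_congr rfl fun T _ => congrArg (· * _) ?_
  rw [← π.prod_prod_parts]
  refine prod_congr rfl fun B hB => prod_congr rfl fun i hi => ?_
  simp only [mem_inter, hi, and_true]

end AffineMoments

section Cumulant

variable {n : ℕ}

def cumulantCoeff (k : ℕ) : ℂ := (-1) ^ (k - 1) * (k - 1).factorial

lemma cumulant_eq_sum_cumulantCoeff (μ : Finset (Fin n) → ℂ) (I : Finset (Fin n)) :
    cumulant μ I = ∑ π : Finpartition I, cumulantCoeff #π.parts * ∏ B ∈ π.parts, μ B := rfl

lemma cumulantCoeff_add_two (m : ℕ) :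
    cumulantCoeff (m + 2) + (m + 1) * cumulantCoeff (m + 1) = 0 := by
  rw [cumulantCoeff, cumulantCoeff, Nat.add_sub_cancel, show m + 2 - 1 = m + 1 by omega,
    Nat.factorial_succ]
  push_cast
  ring

lemma cumulant_insert_eq_zero {s : Finset (Fin n)} {j : Fin n} (hj : j ∉ s) (hs : s.Nonempty)
    (ν : Finset (Fin n) → ℂ) (h_one : ν {j} = 1) (h_insert : ∀ J ⊆ s, ν (insert j J) = ν J) :
    cumulant ν (insert j s) = 0 := by
  rw [cumulant_eq_sum_cumulantCoeff, Finpartition.sum_eq_sum_insertInto hj]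
  refine sum_eq_zero fun σ _ => ?_
  have hterm : ∀ B (hB : B ∈ insert ∅ σ.parts),
      cumulantCoeff #(σ.insertInto hj hB).parts * ∏ C ∈ (σ.insertInto hj hB).parts, ν C =
        cumulantCoeff (#(σ.parts.erase B) + 1) * ∏ C ∈ σ.parts, ν C := by
    intro B hB
    rw [σ.card_insertInto hj hB, σ.prod_insertInto hj hB]
    rcases mem_insert.1 hB with rfl | hB
    · rw [insert_empty, h_one, one_mul, erase_eq_of_notMem σ.empty_notMem_parts]
    · rw [h_insert B (σ.le hB), mul_prod_erase _ _ hB]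
  obtain ⟨m, hm⟩ : ∃ m, #σ.parts = m + 1 :=
    Nat.exists_eq_add_one.2 (card_pos.2 (σ.parts_nonempty hs.ne_empty))
  rw [sum_congr rfl fun B _ => hterm B.1 B.2,
    sum_attach _ fun B => cumulantCoeff (#(σ.parts.erase B) + 1) * ∏ C ∈ σ.parts, ν C,
    sum_insert σ.empty_notMem_parts, erase_eq_of_notMem σ.empty_notMem_parts,
    sum_congr rfl fun B hB => by rw [card_erase_of_mem hB], sum_const, hm, nsmul_eq_mul,
    Nat.add_sub_cancel]
  push_cast
  linear_combination (∏ C ∈ σ.parts, ν C) * cumulantCoeff_add_two m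

lemma cumulant_inter_eq_zero {I T : Finset (Fin n)} (hIT : ¬ I ⊆ T) (hI : 1 < #I)
    {μ : Finset (Fin n) → ℂ} (hμ : μ ∅ = 1) :
    cumulant (fun J => μ (T ∩ J)) I = 0 := by
  obtain ⟨j, hjI, hjT⟩ := not_subset.1 hIT
  rw [← insert_erase hjI]
  refine cumulant_insert_eq_zero (notMem_erase j I) ?_ _ ?_ fun J _ => ?_
  · rwa [← card_pos, card_erase_of_mem hjI, Nat.sub_pos_iff_lt]
  · rwa [inter_singleton_of_notMem hjT]
  · rw [inter_insert_of_notMem hjT]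

lemma cumulant_inter_self (μ : Finset (Fin n) → ℂ) (I : Finset (Fin n)) :
    cumulant (fun J => μ (I ∩ J)) I = cumulant μ I :=
  sum_congr rfl fun π _ => congrArg (_ * ·) <|
    prod_congr rfl fun _ hB => congrArg μ (inter_eq_right.2 (π.le hB))

lemma cumulant_singleton (μ : Finset (Fin n) → ℂ) (i : Fin n) : cumulant μ {i} = μ {i} := by
  have := ((isAtom_singleton i).uniqueFinpartition
    (P := .indiscrete (singleton_ne_empty i))).instSubsingleton
  rw [cumulant, Fintype.sum_subsingleton _ (.indiscrete (singleton_ne_empty i))]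
  simp

lemma cumulant_affineMoments (c b : Fin n → ℂ) (μ : Finset (Fin n) → ℂ) (I : Finset (Fin n)) :
    cumulant (affineMoments c b μ) I = ∑ T ∈ I.powerset,
      (∏ i ∈ I, if i ∈ T then c i else b i) * cumulant (fun J => μ (T ∩ J)) I := by
  simp only [cumulant_eq_sum_cumulantCoeff, prod_affineMoments_parts, mul_sum]
  rw [sum_comm]
  exact sum_congr rfl fun T _ => sum_congr rfl fun π _ => mul_left_comm _ _ _

lemma cumulant_affineMoments_of_one_lt_card (c b : Fin n → ℂ) {μ : Finset (Fin n) → ℂ}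
    (hμ : μ ∅ = 1) {I : Finset (Fin n)} (hI : 1 < #I) :
    cumulant (affineMoments c b μ) I = cumulant μ I * ∏ i ∈ I, c i := by
  rw [cumulant_affineMoments, sum_eq_single_of_mem I (mem_powerset_self I), cumulant_inter_self,
    prod_ite_of_true fun _ h => h, mul_comm]
  intro T hT hTI
  rw [cumulant_inter_eq_zero (fun hIT => hTI (subset_antisymm (mem_powerset.1 hT) hIT)) hI hμ,
    mul_zero]

lemma cumulant_affineMoments_singleton (c b : Fin n → ℂ) (μ : Finset (Fin n) → ℂ) (i : Fin n) :
    cumulant (affineMoments c b μ) {i} = c i * cumulant μ {i} + b i * μ ∅ := by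
  have hpowerset : ({i} : Finset (Fin n)).powerset = {{i}, ∅} := by
    ext T
    simp [subset_singleton_iff, or_comm]
  rw [cumulant_singleton, cumulant_singleton, affineMoments, hpowerset,
    sum_pair (singleton_ne_empty i)]
  simp

end Cumulant

theorem cumulants_change_of_states_general {n : ℕ}
    (p : Finset (Fin n) → ℂ) (hp : ∑ I : Finset (Fin n), p I = 1)
    (a b : Fin n → ℂ)
    (μ μ' : Finset (Fin n) → ℂ)
    (hμ : ∀ I : Finset (Fin n), μ I = ∑ J ∈ univ.filter (fun J => I ⊆ J), p J)
    (hμ' : ∀ I : Finset (Fin n),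
      μ' I = ∑ J : Finset (Fin n), p J * ∏ i ∈ I, (if i ∈ J then a i else b i)) :
    (∀ I : Finset (Fin n), 2 ≤ I.card →
        cumulant μ' I = cumulant μ I * ∏ i ∈ I, (a i - b i)) ∧
    (∀ i : Fin n, cumulant μ' {i} = (a i - b i) * cumulant μ {i} + b i) := by
  have hμ₀ : μ ∅ = 1 := by rw [hμ, filter_true_of_mem fun J _ => empty_subset J, hp]
  have hμ'_eq : μ' = affineMoments (a - b) b μ := funext fun J => by
    rw [hμ', sum_mul_prod_ite_eq_affineMoments, funext hμ]
  subst hμ'_eq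
  refine ⟨fun I hI => cumulant_affineMoments_of_one_lt_card _ _ hμ₀ hI, fun i => ?_⟩
  rw [cumulant_affineMoments_singleton, hμ₀, mul_one, Pi.sub_apply]

/-- changing the values of the binary variables from `0/1` to `b_i/a_i`
rescales the higher cumulants by `∏_{i∈I}(a_i − b_i)` and transforms first-order
cumulants affinely. -/
theorem cumulants_change_of_states {n : ℕ} (hn : 1 ≤ n)
    (p : Finset (Fin n) → ℂ) (hp : ∑ I : Finset (Fin n), p I = 1)
    (a b : Fin n → ℂ)
    (μ μ' : Finset (Fin n) → ℂ)
    (hμ : ∀ I : Finset (Fin n), μ I = ∑ J ∈ univ.filter (fun J => I ⊆ J), p J)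
    (hμ' : ∀ I : Finset (Fin n),
      μ' I = ∑ J : Finset (Fin n), p J * ∏ i ∈ I, (if i ∈ J then a i else b i)) :
    (∀ I : Finset (Fin n), 2 ≤ I.card →
        cumulant μ' I = cumulant μ I * ∏ i ∈ I, (a i - b i)) ∧
    (∀ i : Fin n, cumulant μ' {i} = (a i - b i) * cumulant μ {i} + b i) :=
  cumulants_change_of_states_general p hp a b μ μ' hμ hμ'
end

section
/- Let n ≥ 1 and let V ⊆ ℂ^{2^n − 1} be a Zariski-closed set whose coordinates k_I are indexed by the nonempty subsets I of [n]. For c ∈ (ℂ∖{0})^n and d ∈ ℂ^n define T_{c,d} : ℂ^{2^n−1} → ℂ^{2^n−1} by (T_{c,d} k)_I = (∏_{i ∈ I} c_i)·k_I for |I| ≥ 2 and (T_{c,d} k)_{{i}} = c_i·k_{{i}} + d_i for each i ∈ [n]. Then V is invariant under T_{c,d} for all such pairs (c,d) if and only if V is the common zero locus of a family of polynomials each of which involves only the variables {k_I : |I| ≥ 2} and is homogeneous with respect to the ℤⁿ-grading in which k_I has degree ∑_{i ∈ I} e_i (e_i the i-th unit vector of ℤⁿ). -/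
open Finset

/-- The index type of coordinates: nonempty subsets of `[n]`. -/
abbrev NESubset (n : ℕ) := {I : Finset (Fin n) // I.Nonempty}

/-- The transformation `T_{c,d}` of cumulant coordinates: `k_I ↦ (∏_{i∈I} c_i)·k_I`
for `|I| ≥ 2` and `k_{i} ↦ c_i·k_{i} + d_i`. -/
noncomputable def cumulantAction {n : ℕ} (c d : Fin n → ℂ)
    (k : NESubset n → ℂ) : NESubset n → ℂ :=
  fun I => (∏ i ∈ I.1, c i) * k I + (if I.1.card = 1 then ∑ i ∈ I.1, d i else 0)

/-- A polynomial in the variables `k_I` involves only the higher cumulants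
`{k_I : |I| ≥ 2}`. -/
def OnlyHigherCumulants {n : ℕ} (p : MvPolynomial (NESubset n) ℂ) : Prop :=
  ∀ m ∈ p.support, ∀ v ∈ m.support, 2 ≤ v.1.card

/-- The `ℤⁿ`-degree of a monomial (exponent vector `m`) in the grading
`deg(k_I) = ∑_{i∈I} e_i`. -/
def znDegree {n : ℕ} (m : NESubset n →₀ ℕ) : Fin n → ℕ :=
  fun i => ∑ v ∈ m.support, (if i ∈ v.1 then m v else 0)

/-- A polynomial is homogeneous in the `ℤⁿ`-grading `deg(k_I) = ∑_{i∈I} e_i`. -/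
def ZnHomogeneous {n : ℕ} (p : MvPolynomial (NESubset n) ℂ) : Prop :=
  ∀ m ∈ p.support, ∀ m' ∈ p.support, znDegree m = znDegree m'

namespace InvHelper
open MvPolynomial

variable {n : ℕ}

def E (i : Fin n) : NESubset n := ⟨{i}, Finset.singleton_nonempty i⟩

lemma E_inj : Function.Injective (E (n := n)) := by
  intro i j h
  have : ({i} : Finset (Fin n)) = {j} := congrArg (fun v => v.1) h
  exact Finset.singleton_inj.mp this

noncomputable def elt (v : NESubset n) : Fin n := v.1.min' v.2

lemma elt_E (i : Fin n) : elt (E i) = i := Finset.min'_singleton i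

lemma E_elt {v : NESubset n} (h : v.1.card = 1) : E (elt v) = v := by
  obtain ⟨i, hi⟩ := Finset.card_eq_one.mp h
  have h2 : elt v = i := by
    simp only [elt]
    simp [hi]
  rw [h2]
  exact Subtype.ext hi.symm

noncomputable def lowF (m : NESubset n →₀ ℕ) : Fin n →₀ ℕ :=
  Finsupp.equivFunOnFinite.symm fun i => m (E i)

lemma lowF_apply (m : NESubset n →₀ ℕ) (i : Fin n) : lowF m i = m (E i) := rfl

noncomputable def highPart (m : NESubset n →₀ ℕ) : NESubset n →₀ ℕ :=
  m.filter fun v => v.1.card ≠ 1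

noncomputable def znF (m : NESubset n →₀ ℕ) : Fin n →₀ ℕ :=
  Finsupp.equivFunOnFinite.symm (znDegree m)

lemma znF_coe (m : NESubset n →₀ ℕ) : ⇑(znF m) = znDegree m := rfl

lemma znProd (c : Fin n → ℂ) (m : NESubset n →₀ ℕ) :
    ∏ v ∈ m.support, (∏ i ∈ v.1, c i) ^ m v = ∏ i, c i ^ znDegree m i := by
  have h1 : ∀ v ∈ m.support, (∏ i ∈ v.1, c i) ^ m v
      = ∏ i : Fin n, c i ^ (if i ∈ v.1 then m v else 0) := by
    intro v _
    rw [← Finset.prod_pow]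
    rw [show (∏ i : Fin n, c i ^ (if i ∈ v.1 then m v else 0))
        = ∏ i : Fin n, (if i ∈ v.1 then c i ^ m v else 1) from
      Finset.prod_congr rfl fun i _ => by split_ifs <;> simp]
    rw [Finset.prod_ite_mem, Finset.univ_inter]
  rw [Finset.prod_congr rfl h1, Finset.prod_comm]
  refine Finset.prod_congr rfl fun i _ => ?_
  rw [Finset.prod_pow_eq_pow_sum]
  rfl

noncomputable def kt (k : NESubset n → ℂ) (t : Fin n → ℂ) : NESubset n → ℂ :=
  fun v => if v.1.card = 1 then t (elt v) else k v

lemma kt_eq_action (k : NESubset n → ℂ) (t : Fin n → ℂ) :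
    kt k t = cumulantAction (fun _ => 1) (fun i => t i - k (E i)) k := by
  funext v
  simp only [cumulantAction, Finset.prod_const_one, one_mul, kt]
  by_cases h : v.1.card = 1
  · obtain ⟨i, hi⟩ := Finset.card_eq_one.mp h
    have hv : v = E i := Subtype.ext hi
    subst hv
    rw [if_pos h, if_pos h, elt_E]
    simp only [E, Finset.sum_singleton]
    ring
  · rw [if_neg h, if_neg h, add_zero]

lemma kt_self (k : NESubset n → ℂ) : kt k (fun i => k (E i)) = k := by
  funext v
  simp only [kt]
  split_ifs with h
  · rw [E_elt h]
  · rfl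

noncomputable def Hk (k : NESubset n → ℂ) (m : NESubset n →₀ ℕ) : ℂ :=
  ∏ v ∈ m.support.filter (fun v => v.1.card ≠ 1), k v ^ m v

lemma highPart_support (m : NESubset n →₀ ℕ) :
    (highPart m).support = m.support.filter (fun v => v.1.card ≠ 1) := by
  ext v
  simp only [highPart, Finsupp.mem_support_iff, Finsupp.filter_apply, Finset.mem_filter]
  split_ifs with h
  · simp [h]
  · simp [h]

lemma highPart_apply_pos (m : NESubset n →₀ ℕ) {v : NESubset n} (h : v.1.card ≠ 1) :
    highPart m v = m v := by
  simp [highPart, Finsupp.filter_apply, h]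

lemma Hk_eval (k : NESubset n → ℂ) (m : NESubset n →₀ ℕ) :
    ((highPart m).prod fun v e => k v ^ e) = Hk k m := by
  rw [Finsupp.prod, Hk, highPart_support]
  refine Finset.prod_congr rfl fun v hv => ?_
  rw [highPart_apply_pos m (Finset.mem_filter.mp hv).2]

lemma low_prod (t : Fin n → ℂ) (m : NESubset n →₀ ℕ) :
    ∏ v ∈ m.support.filter (fun v => v.1.card = 1), t (elt v) ^ m v
      = ∏ i, t i ^ lowF m i := by
  classical
  have h1 : ∏ i, t i ^ lowF m i
      = ∏ i ∈ Finset.univ.filter (fun i => E i ∈ m.support), t i ^ m (E i) := by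
    rw [Finset.prod_filter]
    refine Finset.prod_congr rfl fun i _ => ?_
    rw [lowF_apply]
    split_ifs with h
    · rfl
    · rw [Finsupp.notMem_support_iff.mp h, pow_zero]
  rw [h1]
  refine (Finset.prod_nbij (fun i => E i) ?_ ?_ ?_ ?_).symm
  · intro i hi
    rw [Finset.mem_filter] at hi ⊢
    exact ⟨hi.2, Finset.card_singleton i⟩
  · intro i hi j hj h
    exact E_inj h
  · intro v hv
    rw [Finset.mem_coe, Finset.mem_filter] at hv
    refine ⟨elt v, ?_, E_elt hv.2⟩
    rw [Finset.mem_coe, Finset.mem_filter, E_elt hv.2]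
    exact ⟨Finset.mem_univ _, hv.1⟩
  · intro i hi
    rw [elt_E]

lemma eval_kt_monomial (k : NESubset n → ℂ) (t : Fin n → ℂ) (m : NESubset n →₀ ℕ) (a : ℂ) :
    eval (kt k t) (monomial m a) = a * Hk k m * ∏ i, t i ^ lowF m i := by
  classical
  rw [eval_monomial, Finsupp.prod]
  rw [← Finset.prod_filter_mul_prod_filter_not m.support (fun v => v.1.card = 1)]
  have h1 : ∏ v ∈ m.support.filter (fun v => v.1.card = 1), kt k t v ^ m v
      = ∏ i, t i ^ lowF m i := by
    rw [← low_prod t m]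
    refine Finset.prod_congr rfl fun v hv => ?_
    rw [kt, if_pos (Finset.mem_filter.mp hv).2]
  have h2 : ∏ v ∈ m.support.filter (fun v => ¬v.1.card = 1), kt k t v ^ m v = Hk k m := by
    rw [Hk]
    refine Finset.prod_congr rfl fun v hv => ?_
    rw [kt, if_neg (Finset.mem_filter.mp hv).2]
  rw [h1, h2]
  ring

noncomputable def Phi (k : NESubset n → ℂ) (p : MvPolynomial (NESubset n) ℂ) :
    MvPolynomial (Fin n) ℂ :=
  ∑ m ∈ p.support, monomial (lowF m) (coeff m p * Hk k m)

lemma eval_Phi (k : NESubset n → ℂ) (t : Fin n → ℂ) (p : MvPolynomial (NESubset n) ℂ) :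
    eval t (Phi k p) = eval (kt k t) p := by
  conv_rhs => rw [p.as_sum, map_sum]
  rw [Phi, map_sum]
  refine Finset.sum_congr rfl fun m _ => ?_
  rw [eval_kt_monomial, eval_monomial, Finsupp.prod_pow]
  try ring

noncomputable def pLow (p : MvPolynomial (NESubset n) ℂ) (β : Fin n →₀ ℕ) :
    MvPolynomial (NESubset n) ℂ :=
  ∑ m ∈ p.support.filter (fun m => lowF m = β), monomial (highPart m) (coeff m p)

lemma coeff_Phi (k : NESubset n → ℂ) (p : MvPolynomial (NESubset n) ℂ) (β : Fin n →₀ ℕ) :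
    coeff β (Phi k p) = eval k (pLow p β) := by
  classical
  rw [Phi, coeff_sum, pLow, map_sum, Finset.sum_filter]
  refine Finset.sum_congr rfl fun m _ => ?_
  rw [coeff_monomial]
  split_ifs with h
  · rw [eval_monomial, Hk_eval]
  · rfl

lemma pLow_higher (p : MvPolynomial (NESubset n) ℂ) (β : Fin n →₀ ℕ) :
    OnlyHigherCumulants (pLow p β) := by
  intro m hm v hv
  have hc : coeff m (pLow p β) ≠ 0 := mem_support_iff.mp hm
  rw [pLow, coeff_sum] at hc
  obtain ⟨m', hm', hne⟩ := Finset.exists_ne_zero_of_sum_ne_zero hc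
  classical
  rw [coeff_monomial] at hne
  have heq : highPart m' = m := by
    by_contra h
    rw [if_neg h] at hne
    exact hne rfl
  subst heq
  rw [highPart_support, Finset.mem_filter] at hv
  have h1 : 1 ≤ v.1.card := Finset.Nonempty.card_pos v.2
  omega

lemma stepA_vanish {V : Set (NESubset n → ℂ)}
    (hinv : ∀ c d : Fin n → ℂ, (∀ i, c i ≠ 0) → ∀ k ∈ V, cumulantAction c d k ∈ V)
    (p : MvPolynomial (NESubset n) ℂ) (hp : ∀ k ∈ V, eval k p = 0) (β : Fin n →₀ ℕ) :
    ∀ k ∈ V, eval k (pLow p β) = 0 := by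
  intro k hk
  have hPhi : Phi k p = 0 := by
    apply MvPolynomial.funext
    intro t
    rw [eval_Phi, map_zero]
    apply hp
    rw [kt_eq_action]
    exact hinv _ _ (fun _ => one_ne_zero) k hk
  rw [← coeff_Phi, hPhi, coeff_zero]

lemma stepA_exists (p : MvPolynomial (NESubset n) ℂ) (k : NESubset n → ℂ)
    (h : eval k p ≠ 0) : ∃ β, eval k (pLow p β) ≠ 0 := by
  by_contra hall
  push_neg at hall
  apply h
  have hPhi : Phi k p = 0 := by
    ext β
    rw [coeff_Phi, hall β, coeff_zero]
  have h2 := eval_Phi k (fun i => k (E i)) p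
  rw [hPhi, kt_self, map_zero] at h2
  exact h2.symm

noncomputable def Psi (k : NESubset n → ℂ) (q : MvPolynomial (NESubset n) ℂ) :
    MvPolynomial (Fin n) ℂ :=
  ∑ m ∈ q.support, monomial (znF m) (coeff m q * (m.prod fun v e => k v ^ e))

lemma cA_zero (c : Fin n → ℂ) (k : NESubset n → ℂ) (v : NESubset n) :
    cumulantAction c 0 k v = (∏ i ∈ v.1, c i) * k v := by
  simp [cumulantAction]

lemma eval_Psi (k : NESubset n → ℂ) (c : Fin n → ℂ) (q : MvPolynomial (NESubset n) ℂ) :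
    eval c (Psi k q) = eval (cumulantAction c 0 k) q := by
  conv_rhs => rw [q.as_sum, map_sum]
  rw [Psi, map_sum]
  refine Finset.sum_congr rfl fun m _ => ?_
  rw [eval_monomial, eval_monomial]
  have h1 : ∀ v ∈ m.support, cumulantAction c 0 k v ^ m v
      = (∏ i ∈ v.1, c i) ^ m v * k v ^ m v := by
    intro v _
    rw [cA_zero, mul_pow]
  have hz : ((znF m).prod fun i e => c i ^ e) = ∏ i, c i ^ znDegree m i :=
    Finsupp.prod_pow _ _
  have hm2 : (m.prod fun v e => cumulantAction c 0 k v ^ e)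
      = (∏ i, c i ^ znDegree m i) * m.prod fun v e => k v ^ e := by
    rw [Finsupp.prod, Finsupp.prod, Finset.prod_congr rfl h1, Finset.prod_mul_distrib, znProd]
  rw [hz, hm2]
  ring

noncomputable def qHom (q : MvPolynomial (NESubset n) ℂ) (α : Fin n →₀ ℕ) :
    MvPolynomial (NESubset n) ℂ :=
  ∑ m ∈ q.support.filter (fun m => znF m = α), monomial m (coeff m q)

lemma coeff_Psi (k : NESubset n → ℂ) (q : MvPolynomial (NESubset n) ℂ) (α : Fin n →₀ ℕ) :
    coeff α (Psi k q) = eval k (qHom q α) := by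
  classical
  rw [Psi, coeff_sum, qHom, map_sum, Finset.sum_filter]
  refine Finset.sum_congr rfl fun m _ => ?_
  rw [coeff_monomial]
  split_ifs with h
  · rw [eval_monomial]
  · rfl

lemma qHom_support (q : MvPolynomial (NESubset n) ℂ) (α : Fin n →₀ ℕ) :
    (qHom q α).support ⊆ q.support.filter (fun m => znF m = α) := by
  intro m hm
  have hc : coeff m (qHom q α) ≠ 0 := mem_support_iff.mp hm
  rw [qHom, coeff_sum] at hc
  obtain ⟨m', hm', hne⟩ := Finset.exists_ne_zero_of_sum_ne_zero hc
  classical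
  rw [coeff_monomial] at hne
  have heq : m' = m := by
    by_contra h
    rw [if_neg h] at hne
    exact hne rfl
  rwa [← heq]

lemma qHom_homog (q : MvPolynomial (NESubset n) ℂ) (α : Fin n →₀ ℕ) :
    ZnHomogeneous (qHom q α) := by
  intro m hm m' hm'
  have h1 := (Finset.mem_filter.mp (qHom_support q α hm)).2
  have h2 := (Finset.mem_filter.mp (qHom_support q α hm')).2
  have : znF m = znF m' := h1.trans h2.symm
  calc znDegree m = ⇑(znF m) := rfl
    _ = ⇑(znF m') := by rw [this]
    _ = znDegree m' := rfl

lemma qHom_higher (q : MvPolynomial (NESubset n) ℂ) (α : Fin n →₀ ℕ)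
    (hq : OnlyHigherCumulants q) : OnlyHigherCumulants (qHom q α) := by
  intro m hm v hv
  exact hq m (Finset.mem_filter.mp (qHom_support q α hm)).1 v hv

lemma stepB_vanish {V : Set (NESubset n → ℂ)}
    (hinv : ∀ c d : Fin n → ℂ, (∀ i, c i ≠ 0) → ∀ k ∈ V, cumulantAction c d k ∈ V)
    (q : MvPolynomial (NESubset n) ℂ) (hq : ∀ k ∈ V, eval k q = 0) (α : Fin n →₀ ℕ) :
    ∀ k ∈ V, eval k (qHom q α) = 0 := by
  intro k hk
  have hzero : Psi k q = 0 := by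
    have h1 : (∏ i : Fin n, (X i : MvPolynomial (Fin n) ℂ)) * Psi k q = 0 := by
      apply MvPolynomial.funext
      intro c
      rw [map_mul, map_prod, map_zero]
      simp only [eval_X]
      by_cases hc : ∀ i, c i ≠ 0
      · rw [eval_Psi, hq _ (hinv c 0 hc k hk), mul_zero]
      · push_neg at hc
        obtain ⟨i, hi⟩ := hc
        rw [Finset.prod_eq_zero (Finset.mem_univ i) hi, zero_mul]
    have hX : (∏ i : Fin n, (X i : MvPolynomial (Fin n) ℂ)) ≠ 0 := by
      intro h
      have h2 := congrArg (eval (fun _ => (1 : ℂ))) h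
      simp at h2
    exact (mul_eq_zero.mp h1).resolve_left hX
  rw [← coeff_Psi, hzero, coeff_zero]

lemma stepB_exists (q : MvPolynomial (NESubset n) ℂ) (k : NESubset n → ℂ)
    (h : eval k q ≠ 0) : ∃ α, eval k (qHom q α) ≠ 0 := by
  by_contra hall
  push_neg at hall
  apply h
  have hzero : Psi k q = 0 := by
    ext α
    rw [coeff_Psi, hall α, coeff_zero]
  have h2 := eval_Psi k (fun _ => 1) q
  have hk : cumulantAction (fun _ => (1 : ℂ)) 0 k = k := by
    funext v
    simp [cumulantAction]
  rw [hzero, hk, map_zero] at h2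
  exact h2.symm

lemma eval_action (c d : Fin n → ℂ) (k : NESubset n → ℂ) (p : MvPolynomial (NESubset n) ℂ)
    (hhi : OnlyHigherCumulants p) (hhom : ZnHomogeneous p) (h0 : eval k p = 0) :
    eval (cumulantAction c d k) p = 0 := by
  rcases Finset.eq_empty_or_nonempty p.support with hs | ⟨m₀, hm₀⟩
  · rw [MvPolynomial.support_eq_empty.mp hs, map_zero]
  · have key : ∀ m ∈ p.support, eval (cumulantAction c d k) (monomial m (coeff m p))
        = (∏ i, c i ^ znDegree m₀ i) * eval k (monomial m (coeff m p)) := by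
      intro m hm
      rw [eval_monomial, eval_monomial, Finsupp.prod, Finsupp.prod]
      have h1 : ∀ v ∈ m.support, cumulantAction c d k v ^ m v
          = (∏ i ∈ v.1, c i) ^ m v * k v ^ m v := by
        intro v hv
        have h2 : 2 ≤ v.1.card := hhi m hm v hv
        have h3 : v.1.card ≠ 1 := by omega
        rw [show cumulantAction c d k v = (∏ i ∈ v.1, c i) * k v by
          simp [cumulantAction, h3], mul_pow]
      rw [Finset.prod_congr rfl h1, Finset.prod_mul_distrib, znProd, hhom m hm m₀ hm₀]
      ring
    conv_lhs => rw [p.as_sum, map_sum]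
    rw [Finset.sum_congr rfl key, ← Finset.mul_sum]
    have h4 : ∑ m ∈ p.support, eval k (monomial m (coeff m p)) = eval k p := by
      conv_rhs => rw [p.as_sum, map_sum]
    rw [h4, h0, mul_zero]

end InvHelper


open InvHelper MvPolynomial

/-- a Zariski-closed set `V ⊆ ℂ^{2ⁿ−1}` is invariant under all
transformations `T_{c,d}` (for `c ∈ (ℂ∖{0})ⁿ`, `d ∈ ℂⁿ`) if and only if it is the
common zero locus of a family of `ℤⁿ`-homogeneous polynomials in the higher
cumulants `k_I`, `|I| ≥ 2`. -/
theorem invariant_iff_higher_homogeneous {n : ℕ} (hn : 1 ≤ n)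
    (V : Set (NESubset n → ℂ))
    (hV : ∃ S : Set (MvPolynomial (NESubset n) ℂ),
      V = {k | ∀ p ∈ S, MvPolynomial.eval k p = 0}) :
    (∀ c d : Fin n → ℂ, (∀ i, c i ≠ 0) → ∀ k ∈ V, cumulantAction c d k ∈ V) ↔
    (∃ S : Set (MvPolynomial (NESubset n) ℂ),
      (∀ p ∈ S, OnlyHigherCumulants p ∧ ZnHomogeneous p) ∧
      V = {k | ∀ p ∈ S, MvPolynomial.eval k p = 0}) := by
  constructor
  · intro hinv
    refine ⟨{p | OnlyHigherCumulants p ∧ ZnHomogeneous p ∧ ∀ k ∈ V, eval k p = 0},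
      fun p hp => ⟨hp.1, hp.2.1⟩, ?_⟩
    ext k₀
    constructor
    · intro hk₀ p hp
      exact hp.2.2 k₀ hk₀
    · intro hk₀
      by_contra hnot
      obtain ⟨S₀, hS₀⟩ := hV
      have hne : ¬ (∀ p ∈ S₀, eval k₀ p = 0) := by
        intro h
        exact hnot (by rw [hS₀]; exact h)
      push_neg at hne
      obtain ⟨p, hpS, hpk⟩ := hne
      have hpV : ∀ k ∈ V, eval k p = 0 := by
        intro k hk
        rw [hS₀] at hk
        exact hk p hpS
      obtain ⟨β, hβ⟩ := stepA_exists p k₀ hpk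
      obtain ⟨α, hα⟩ := stepB_exists (pLow p β) k₀ hβ
      exact hα (hk₀ _ ⟨qHom_higher _ _ (pLow_higher p β), qHom_homog _ _,
        stepB_vanish hinv _ (stepA_vanish hinv p hpV β) α⟩)
  · rintro ⟨S, hS, rfl⟩ c d hc k hk p hp
    exact eval_action c d k p (hS p hp).1 (hS p hp).2 (hk p hp)
end

section
/- Let n ≥ 1. Let t : 2^[n] → ℂ satisfy ∑_{J ⊆ [n]} t_J = 1, and let a^{(0)}, a^{(1)} ∈ ℂⁿ; set b_i = a_i^{(1)} − a_i^{(0)}. Define the moments of the complete hidden subset model by μ_I = ∑_{J ⊆ [n]} t_J · ∏_{i ∈ I}(a_i^{(1)} if i ∈ J else a_i^{(0)}), and define the moments of the mixing table by μ^{(t)}_I = ∑_{J ⊇ I} t_J. Let k and k^{(t)} denote the respective cumulants (via k_I = ∑_{π ∈ Π(I)} (−1)^{|π|−1}(|π|−1)! ∏_{B ∈ π} μ_B). Then k_{{i}} = a_i^{(0)} + b_i · k^{(t)}_{{i}} for each i ∈ [n], and k_I = k^{(t)}_I · ∏_{i ∈ I} b_i for every I ⊆ [n] with |I| ≥ 2.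 -/
open Finset

/-! Cumulants are characterised by the recursion `ν I = ∑_{a ∈ S ⊆ I} κ S * ν (I \ S)` for any
`a ∈ I`: expanding `κ` over partitions, the coefficient of `∏_{B ∈ ρ} ν B` becomes
`m(k) + (k - 1) m(k - 1) = [k = 1]`, where `m` is the Möbius function of the partition lattice and
`k` the number of blocks of `ρ`.

The moments of the hidden subset model are the subset convolution of the moments
`μt T * ∏_{i ∈ T} b_i` of `b · 1_J` with the moments `∏_{i ∈ T} a⁰_i` of the constant vector `a⁰`.
Cumulants are additive under subset convolution (this follows from the recursion), scaling by `b`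
multiplies the cumulant of `I` by `∏_{i ∈ I} b_i`, and a constant vector has no cumulants of order
at least two. -/

variable {ι R : Type*} [DecidableEq ι]

namespace Finpartition

variable {I C : Finset ι}

lemma parts_avoid_of_mem (π : Finpartition I) (hC : C ∈ π.parts) :
    (π.avoid C).parts = π.parts.erase C := by
  ext B
  rw [mem_avoid, mem_erase]
  constructor
  · rintro ⟨D, hD, hDC, rfl⟩
    have hne : D ≠ C := by rintro rfl; exact hDC le_rfl
    have hdis : Disjoint D C := π.disjoint hD hC hne
    rw [sdiff_eq_self_of_disjoint hdis]
    exact ⟨hne, hD⟩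
  · rintro ⟨hne, hB⟩
    have hdis : Disjoint B C := π.disjoint hB hC hne
    exact ⟨B, hB, fun hle => π.ne_bot hB (hdis.eq_bot_of_le hle), sdiff_eq_self_of_disjoint hdis⟩

lemma notMem_parts_of_sdiff (hC : C.Nonempty) (σ : Finpartition (I \ C)) : C ∉ σ.parts :=
  fun h => hC.ne_empty ((disjoint_self_iff_empty C).1 (sdiff_disjoint.mono_left (σ.le h)))

lemma parts_extendOfLE_sdiff (hC : C.Nonempty) (hCI : C ⊆ I) (σ : Finpartition (I \ C)) :
    (σ.extendOfLE sdiff_le).parts = insert C σ.parts := by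
  rw [σ.parts_extendOfLE_of_lt (sdiff_ssubset hCI hC), Finset.sdiff_sdiff_eq_self hCI]

lemma extendOfLE_avoid (π : Finpartition I) (hC : C ∈ π.parts) :
    (π.avoid C).extendOfLE sdiff_le = π := by
  ext1
  rw [parts_extendOfLE_sdiff (π.nonempty_of_mem_parts hC) (π.le hC), parts_avoid_of_mem π hC,
    insert_erase hC]

lemma avoid_extendOfLE (hC : C.Nonempty) (hCI : C ⊆ I) (σ : Finpartition (I \ C)) :
    (σ.extendOfLE sdiff_le).avoid C = σ := by
  have hmem : C ∈ (σ.extendOfLE sdiff_le).parts := by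
    rw [parts_extendOfLE_sdiff hC hCI]
    exact mem_insert_self _ _
  ext1
  rw [parts_avoid_of_mem _ hmem, parts_extendOfLE_sdiff hC hCI,
    erase_insert (notMem_parts_of_sdiff hC σ)]

theorem sum_sum_parts_eq_sum_extendOfLE {M : Type*} [AddCommMonoid M] (I : Finset ι)
    (F : Finpartition I → Finset ι → M) :
    ∑ π : Finpartition I, ∑ C ∈ π.parts, F π C =
      ∑ C ∈ I.powerset with C.Nonempty, ∑ σ : Finpartition (I \ C),
        F (σ.extendOfLE sdiff_le) C := by
  rw [sum_sigma', sum_sigma']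
  refine sum_bij' (fun x _ => ⟨x.2, x.1.avoid x.2⟩) (fun y _ => ⟨y.2.extendOfLE sdiff_le, y.1⟩)
    ?_ ?_ ?_ ?_ ?_
  · rintro ⟨π, C⟩ hC
    simp only [mem_sigma, mem_univ, true_and] at hC
    simp [π.le hC, π.nonempty_of_mem_parts hC]
  · rintro ⟨C, σ⟩ hC
    simp only [mem_sigma, mem_filter, mem_powerset, mem_univ, and_true] at hC
    simp [parts_extendOfLE_sdiff hC.2 hC.1]
  · rintro ⟨π, C⟩ hC
    simp only [mem_sigma, mem_univ, true_and] at hC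
    simp [extendOfLE_avoid π hC]
  · rintro ⟨C, σ⟩ hC
    simp only [mem_sigma, mem_filter, mem_powerset, mem_univ, and_true] at hC
    simp [avoid_extendOfLE hC.2 hC.1]
  · rintro ⟨π, C⟩ hC
    simp only [mem_sigma, mem_univ, true_and] at hC
    simp [extendOfLE_avoid π hC]

lemma card_filter_notMem_parts (π : Finpartition I) {a : ι} (ha : a ∈ I) :
    #{C ∈ π.parts | a ∉ C} = #π.parts - 1 := by
  have hfilter : {C ∈ π.parts | a ∉ C} = π.parts.erase (π.part a) := by
    ext C
    rw [mem_filter, mem_erase]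
    constructor
    · rintro ⟨hC, haC⟩
      exact ⟨fun h => haC ((π.part_eq_iff_mem hC).1 h.symm), hC⟩
    · rintro ⟨hne, hC⟩
      exact ⟨hC, fun haC => hne ((π.part_eq_iff_mem hC).2 haC).symm⟩
  rw [hfilter, card_erase_of_mem (π.part_mem.2 ha)]

lemma eq_indiscrete_of_card_parts_eq_one (hI : I ≠ ∅) (π : Finpartition I) (h : #π.parts = 1) :
    π = indiscrete hI := by
  obtain ⟨B, hB⟩ := card_eq_one.1 h
  have hBI : B = I := by simpa [hB] using π.sup_parts
  ext1
  rw [hB, hBI, indiscrete_parts]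

end Finpartition

lemma Finset.sum_powerset_sdiff_comm {M : Type*} [AddCommMonoid M] (I : Finset ι)
    (f : Finset ι → Finset ι → M) :
    ∑ S ∈ I.powerset, f S (I \ S) = ∑ S ∈ I.powerset, f (I \ S) S := by
  refine sum_nbij' (I \ ·) (I \ ·) (by simp) (by simp) (fun S hS => ?_) (fun S hS => ?_)
    (fun S hS => ?_) <;>
  simp only [mem_powerset] at hS <;> simp [Finset.sdiff_sdiff_eq_self hS]

lemma Finset.sum_filter_mem_powerset_sdiff {M : Type*} [AddCommMonoid M] {I : Finset ι} {a : ι}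
    (ha : a ∈ I) (f : Finset ι → Finset ι → M) :
    ∑ S ∈ I.powerset with a ∈ S, f S (I \ S) = ∑ S ∈ I.powerset with a ∉ S, f (I \ S) S := by
  rw [sum_filter, sum_filter, sum_powerset_sdiff_comm I (fun S T => if a ∈ S then f S T else 0)]
  simp only [mem_sdiff, ha, true_and]

section Cumulant

variable [CommRing R]

/-- The Möbius function `μ(π, 1̂)` of the lattice of set partitions, at a partition `π` with `k`
blocks. -/
def partitionMobius (k : ℕ) : R := (-1) ^ (k - 1) * (k - 1).factorial

noncomputable def jointCumulant (ν : Finset ι → R) (I : Finset ι) : R :=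
  ∑ π : Finpartition I, partitionMobius #π.parts * ∏ B ∈ π.parts, ν B

lemma partitionMobius_add_mul_pred {k : ℕ} (hk : 1 ≤ k) :
    partitionMobius k + (k - 1 : ℕ) * partitionMobius (k - 1) = (if k = 1 then 1 else 0 : R) := by
  obtain _ | _ | m := k
  · omega
  · simp [partitionMobius]
  · simp only [partitionMobius, Nat.add_sub_cancel, pow_succ, Nat.factorial_succ]
    push_cast
    ring

variable (ν : Finset ι → R) {I : Finset ι} {a : ι}

lemma sum_partitionMobius_pred_mul_prod (ha : a ∈ I) :
    ∑ π : Finpartition I,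
        ((#π.parts - 1 : ℕ) : R) * (partitionMobius (#π.parts - 1) * ∏ B ∈ π.parts, ν B) =
      ∑ C ∈ I.powerset with C.Nonempty ∧ a ∉ C, ν C * jointCumulant ν (I \ C) := by
  set x : Finpartition I → R := fun π => partitionMobius (#π.parts - 1) * ∏ B ∈ π.parts, ν B
  have hx (π : Finpartition I) :
      ∑ C ∈ π.parts, (if a ∉ C then x π else 0) = ((#π.parts - 1 : ℕ) : R) * x π := by
    rw [← sum_filter, sum_const, Finpartition.card_filter_notMem_parts _ ha, nsmul_eq_mul]
  rw [← sum_congr rfl fun π _ => hx π, Finpartition.sum_sum_parts_eq_sum_extendOfLE,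
    ← filter_filter, sum_filter (fun C => a ∉ C)]
  refine sum_congr rfl fun C hC => ?_
  simp only [mem_filter, mem_powerset] at hC
  by_cases haC : a ∈ C
  · simp [haC]
  simp only [haC, not_false_eq_true, if_true, x, jointCumulant, mul_sum]
  refine sum_congr rfl fun σ _ => ?_
  rw [Finpartition.parts_extendOfLE_sdiff hC.2 hC.1,
    prod_insert (Finpartition.notMem_parts_of_sdiff hC.2 σ),
    card_insert_of_notMem (Finpartition.notMem_parts_of_sdiff hC.2 σ), Nat.add_sub_cancel]
  ring

lemma sum_ite_card_parts_eq_one_mul_prod (hI : I.Nonempty) :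
    ∑ π : Finpartition I, (if #π.parts = 1 then 1 else 0 : R) * ∏ B ∈ π.parts, ν B = ν I := by
  rw [Fintype.sum_eq_single (Finpartition.indiscrete hI.ne_empty)]
  · simp [Finpartition.indiscrete_parts]
  · intro π hπ
    rw [if_neg (mt (Finpartition.eq_indiscrete_of_card_parts_eq_one hI.ne_empty π) hπ), zero_mul]

theorem sum_jointCumulant_mul_sdiff (hν : ν ∅ = 1) (ha : a ∈ I) :
    ∑ S ∈ I.powerset with a ∈ S, jointCumulant ν S * ν (I \ S) = ν I := by
  have hsplit : {C ∈ I.powerset | a ∉ C} = insert ∅ {C ∈ I.powerset | C.Nonempty ∧ a ∉ C} := by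
    ext C
    by_cases hC : C = ∅ <;> simp [hC, nonempty_iff_ne_empty]
  calc ∑ S ∈ I.powerset with a ∈ S, jointCumulant ν S * ν (I \ S)
      = ∑ C ∈ I.powerset with a ∉ C, ν C * jointCumulant ν (I \ C) := by
        rw [sum_filter_mem_powerset_sdiff ha fun S T => jointCumulant ν S * ν T]
        simp only [mul_comm]
    _ = jointCumulant ν I + ∑ C ∈ I.powerset with C.Nonempty ∧ a ∉ C,
          ν C * jointCumulant ν (I \ C) := by
        rw [hsplit, sum_insert (by simp), hν, one_mul, sdiff_empty]
    _ = ∑ π : Finpartition I, (if #π.parts = 1 then 1 else 0 : R) * ∏ B ∈ π.parts, ν B := by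
        rw [← sum_partitionMobius_pred_mul_prod ν ha, jointCumulant, ← sum_add_distrib]
        refine sum_congr rfl fun π _ => ?_
        have hπ : 1 ≤ #π.parts := card_pos.2 (π.parts_nonempty (ne_empty_of_mem ha))
        rw [← partitionMobius_add_mul_pred hπ]
        ring
    _ = ν I := sum_ite_card_parts_eq_one_mul_prod ν ⟨a, ha⟩

theorem eq_jointCumulant_of_sum_mul_sdiff {κ : Finset ι → R} (hν : ν ∅ = 1)
    (hκ : ∀ J, ∀ a ∈ J, ∑ S ∈ J.powerset with a ∈ S, κ S * ν (J \ S) = ν J)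
    (hI : I.Nonempty) : κ I = jointCumulant ν I := by
  induction I using Finset.strongInduction with
  | H I ih =>
  obtain ⟨a, ha⟩ := hI
  have hI : I ∈ {S ∈ I.powerset | a ∈ S} := by simp [ha]
  have hrest : ∑ S ∈ {S ∈ I.powerset | a ∈ S}.erase I, κ S * ν (I \ S) =
      ∑ S ∈ {S ∈ I.powerset | a ∈ S}.erase I, jointCumulant ν S * ν (I \ S) := by
    refine sum_congr rfl fun S hS => ?_
    simp only [mem_erase, mem_filter, mem_powerset] at hS
    rw [ih S (ssubset_of_subset_of_ne hS.2.1 hS.1) ⟨a, hS.2.2⟩]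
  have h := (hκ I a ha).trans (sum_jointCumulant_mul_sdiff ν hν ha).symm
  rw [← add_sum_erase _ (fun S => κ S * ν (I \ S)) hI,
    ← add_sum_erase _ (fun S => jointCumulant ν S * ν (I \ S)) hI, hrest] at h
  simpa [hν] using add_right_cancel h

lemma jointCumulant_singleton (i : ι) : jointCumulant ν {i} = ν {i} := by
  have hcard (π : Finpartition {i}) : #π.parts = 1 :=
    le_antisymm (card_singleton i ▸ π.card_parts_le_card)
      (card_pos.2 (π.parts_nonempty (singleton_ne_empty i)))
  rw [← sum_ite_card_parts_eq_one_mul_prod ν (singleton_nonempty i), jointCumulant]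
  simp [hcard, partitionMobius]

lemma jointCumulant_mul_prod (b : ι → R) :
    jointCumulant (fun S => ν S * ∏ i ∈ S, b i) I = jointCumulant ν I * ∏ i ∈ I, b i := by
  rw [jointCumulant, jointCumulant, sum_mul]
  refine sum_congr rfl fun π _ => ?_
  have hb : ∏ B ∈ π.parts, ∏ i ∈ B, b i = ∏ i ∈ I, b i :=
    (prod_biUnion π.disjoint).symm.trans (by rw [π.biUnion_parts])
  rw [prod_mul_distrib, hb, mul_assoc]

lemma jointCumulant_prod_of_one_lt_card (d : ι → R) (hI : 1 < #I) :
    jointCumulant (fun S => ∏ i ∈ S, d i) I = 0 := by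
  have hrec (J : Finset ι) (a : ι) (ha : a ∈ J) :
      ∑ S ∈ J.powerset with a ∈ S, (if #S = 1 then ∏ i ∈ S, d i else 0) * ∏ i ∈ J \ S, d i =
        ∏ i ∈ J, d i := by
    rw [sum_eq_single_of_mem {a} (by simp [ha])]
    · rw [if_pos (card_singleton a), prod_singleton, sdiff_singleton_eq_erase,
        mul_prod_erase _ _ ha]
    · intro S hS hSa
      simp only [mem_filter, mem_powerset] at hS
      rw [if_neg (fun h => hSa ?_), zero_mul]
      obtain ⟨b, rfl⟩ := card_eq_one.1 h
      rw [mem_singleton.1 hS.2]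
  have h := eq_jointCumulant_of_sum_mul_sdiff (fun S => ∏ i ∈ S, d i) prod_empty hrec
    (card_pos.1 (zero_lt_one.trans hI))
  rwa [if_neg hI.ne', eq_comm] at h

/-- The moment table of `X + Y` for independent random vectors `X`, `Y` with moment tables `α`,
`β`. -/
def powersetConv (α β : Finset ι → R) (I : Finset ι) : R := ∑ T ∈ I.powerset, α T * β (I \ T)

lemma powersetConv_comm (α β : Finset ι → R) : powersetConv α β = powersetConv β α := by
  funext I
  rw [powersetConv, powersetConv, sum_powerset_sdiff_comm I fun S T => α S * β T]
  simp only [mul_comm]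

lemma sum_jointCumulant_mul_powersetConv {α : Finset ι → R} (β : Finset ι → R) (hα : α ∅ = 1)
    (ha : a ∈ I) :
    ∑ S ∈ I.powerset with a ∈ S, jointCumulant α S * powersetConv β α (I \ S) =
      ∑ V ∈ I.powerset with a ∉ V, β V * α (I \ V) := by
  have hmem : ∀ S V, S ∈ {S ∈ I.powerset | a ∈ S} ∧ V ∈ (I \ S).powerset ↔
      S ∈ {S ∈ (I \ V).powerset | a ∈ S} ∧ V ∈ {V ∈ I.powerset | a ∉ V} := by
    intro S V
    simp only [mem_filter, mem_powerset, subset_sdiff]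
    exact ⟨fun ⟨⟨hSI, haS⟩, hVI, hVS⟩ =>
        ⟨⟨⟨hSI, hVS.symm⟩, haS⟩, hVI, disjoint_left.1 hVS.symm haS⟩,
      fun ⟨⟨⟨hSI, hSV⟩, haS⟩, hVI, _⟩ => ⟨⟨hSI, haS⟩, hVI, hSV.symm⟩⟩
  simp only [powersetConv, mul_sum]
  rw [sum_comm' hmem]
  refine sum_congr rfl fun V hV => ?_
  simp only [mem_filter, mem_powerset] at hV
  rw [← sum_jointCumulant_mul_sdiff α hα (mem_sdiff.2 ⟨ha, hV.2⟩), mul_sum]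
  refine sum_congr rfl fun S _ => ?_
  rw [sdiff_right_comm]
  ring

theorem jointCumulant_powersetConv {α β : Finset ι → R} (hα : α ∅ = 1) (hβ : β ∅ = 1)
    (hI : I.Nonempty) :
    jointCumulant (powersetConv α β) I = jointCumulant α I + jointCumulant β I := by
  have hconv : powersetConv α β ∅ = 1 := by simp [powersetConv, hα, hβ]
  refine (eq_jointCumulant_of_sum_mul_sdiff (κ := fun S => jointCumulant α S + jointCumulant β S)
    _ hconv (fun J a ha => ?_) hI).symm
  calc ∑ S ∈ J.powerset with a ∈ S,
        (jointCumulant α S + jointCumulant β S) * powersetConv α β (J \ S)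
      = ∑ V ∈ J.powerset with a ∉ V, β V * α (J \ V) +
          ∑ V ∈ J.powerset with a ∉ V, α V * β (J \ V) := by
        simp only [add_mul, sum_add_distrib]
        rw [powersetConv_comm α β, sum_jointCumulant_mul_powersetConv β hα ha,
          powersetConv_comm β α, sum_jointCumulant_mul_powersetConv α hβ ha]
    _ = ∑ V ∈ J.powerset with a ∉ V, β V * α (J \ V) +
          ∑ V ∈ J.powerset with a ∈ V, β V * α (J \ V) := by
        rw [sum_filter_mem_powerset_sdiff ha fun S T => β S * α T]
        simp only [mul_comm]
    _ = powersetConv α β J := by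
        rw [add_comm, sum_filter_add_sum_filter_not, powersetConv_comm, powersetConv]

lemma sum_mul_prod_ite_eq_powersetConv [Fintype ι] (t : Finset ι → R) (a0 a1 : ι → R) :
    ∑ J, t J * ∏ i ∈ I, (if i ∈ J then a1 i else a0 i) =
      powersetConv (fun T => (∑ J with T ⊆ J, t J) * ∏ i ∈ T, (a1 i - a0 i))
        (fun T => ∏ i ∈ T, a0 i) I := by
  have hprod (J : Finset ι) : ∏ i ∈ I, (if i ∈ J then a1 i else a0 i) =
      ∑ T ∈ I.powerset, (if T ⊆ J then ∏ i ∈ T, (a1 i - a0 i) else 0) * ∏ i ∈ I \ T, a0 i := by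
    calc ∏ i ∈ I, (if i ∈ J then a1 i else a0 i)
        = ∏ i ∈ I, ((if i ∈ J then a1 i - a0 i else 0) + a0 i) :=
          prod_congr rfl fun i _ => by split_ifs <;> ring
      _ = _ := by
          rw [prod_add]
          exact sum_congr rfl fun T _ => by rw [prod_ite_zero]; rfl
  simp only [hprod, mul_sum, powersetConv]
  rw [sum_comm]
  refine sum_congr rfl fun T _ => ?_
  rw [sum_filter, sum_mul, sum_mul]
  refine sum_congr rfl fun J _ => ?_
  split_ifs <;> ring

end Cumulant

lemma cumulant_eq_jointCumulant {n : ℕ} (μ : Finset (Fin n) → ℂ) (I : Finset (Fin n)) :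
    cumulant μ I = jointCumulant μ I :=
  rfl

theorem hidden_subset_model_cumulants_general {n : ℕ}
    (t : Finset (Fin n) → ℂ) (ht : ∑ J : Finset (Fin n), t J = 1)
    (a0 a1 : Fin n → ℂ)
    (μ μt : Finset (Fin n) → ℂ)
    (hμ : ∀ I : Finset (Fin n),
      μ I = ∑ J : Finset (Fin n), t J * ∏ i ∈ I, (if i ∈ J then a1 i else a0 i))
    (hμt : ∀ I : Finset (Fin n), μt I = ∑ J ∈ univ.filter (fun J => I ⊆ J), t J) :
    (∀ i : Fin n, cumulant μ {i} = a0 i + (a1 i - a0 i) * cumulant μt {i}) ∧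
    (∀ I : Finset (Fin n), 2 ≤ I.card →
      cumulant μ I = cumulant μt I * ∏ i ∈ I, (a1 i - a0 i)) := by
  have hμ_conv : μ = powersetConv (fun T => μt T * ∏ i ∈ T, (a1 i - a0 i))
      (fun T => ∏ i ∈ T, a0 i) := by
    funext I
    simp only [hμ, hμt, sum_mul_prod_ite_eq_powersetConv]
  have hμt_empty : μt ∅ = 1 := by simpa [hμt] using ht
  have hcum (I : Finset (Fin n)) (hI : I.Nonempty) : cumulant μ I =
      cumulant μt I * ∏ i ∈ I, (a1 i - a0 i) + jointCumulant (fun T => ∏ i ∈ T, a0 i) I := by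
    rw [cumulant_eq_jointCumulant, cumulant_eq_jointCumulant, hμ_conv,
      jointCumulant_powersetConv (by simp [hμt_empty]) prod_empty hI, jointCumulant_mul_prod]
  refine ⟨fun i => ?_, fun I hI => ?_⟩
  · rw [hcum {i} (singleton_nonempty i), jointCumulant_singleton, prod_singleton, prod_singleton]
    ring
  · rw [hcum I (card_pos.1 (by omega)), jointCumulant_prod_of_one_lt_card _ hI, add_zero]

/-- for the complete hidden subset model with mixing table `t` and
parameters `a⁰, a¹`, the cumulants satisfy `k_i = a_i⁰ + b_i·k^{(t)}_i` and
`k_I = k^{(t)}_I·∏_{i∈I} b_i` for `|I| ≥ 2`, where `b_i = a_i¹ − a_i⁰`. -/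
theorem hidden_subset_model_cumulants {n : ℕ} (hn : 1 ≤ n)
    (t : Finset (Fin n) → ℂ) (ht : ∑ J : Finset (Fin n), t J = 1)
    (a0 a1 : Fin n → ℂ)
    (μ μt : Finset (Fin n) → ℂ)
    (hμ : ∀ I : Finset (Fin n),
      μ I = ∑ J : Finset (Fin n), t J * ∏ i ∈ I, (if i ∈ J then a1 i else a0 i))
    (hμt : ∀ I : Finset (Fin n), μt I = ∑ J ∈ univ.filter (fun J => I ⊆ J), t J) :
    (∀ i : Fin n, cumulant μ {i} = a0 i + (a1 i - a0 i) * cumulant μt {i}) ∧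
    (∀ I : Finset (Fin n), 2 ≤ I.card →
      cumulant μ I = cumulant μt I * ∏ i ∈ I, (a1 i - a0 i)) :=
  hidden_subset_model_cumulants_general t ht a0 a1 μ μt hμ hμt
end

section
/- A triple (k₁, k₂, k_{12}) ∈ ℝ³ lies in the space of cumulants 𝒦₂ — i.e. there exists a probability distribution p : 2^{[2]} → ℝ (p_I ≥ 0, ∑_I p_I = 1) whose moments μ_I = ∑_{J ⊇ I} p_J satisfy μ₁ = k₁, μ₂ = k₂, and μ_{12} − μ₁μ₂ = k_{12} — if and only if the following four inequalities hold: k_{12} ≥ −k₁k₂, k_{12} ≤ k₂(1 − k₁), k_{12} ≤ k₁(1 − k₂), and k_{12} ≥ −(1 − k₁)(1 − k₂). -/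
open Finset

lemma sum_finset_fin_two (p : Finset (Fin 2) → ℝ) :
    ∑ I : Finset (Fin 2), p I = p ∅ + p {0} + p {1} + p univ := by
  have h : (Finset.univ : Finset (Finset (Fin 2))) =
      {∅, {0}, {1}, Finset.univ} := by decide
  rw [h]
  rw [Finset.sum_insert (by decide), Finset.sum_insert (by decide),
    Finset.sum_insert (by decide), Finset.sum_singleton]
  ring

noncomputable def cumulantWitness (k1 k2 k12 : ℝ) (I : Finset (Fin 2)) : ℝ :=
  if I = ∅ then 1 - k1 - k2 + k12 + k1 * k2
  else if I = {0} then k1 - k12 - k1 * k2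
  else if I = {1} then k2 - k12 - k1 * k2
  else k12 + k1 * k2

lemma cumulantWitness_empty (k1 k2 k12 : ℝ) :
    cumulantWitness k1 k2 k12 ∅ = 1 - k1 - k2 + k12 + k1 * k2 := by
  rw [cumulantWitness, if_pos rfl]

lemma cumulantWitness_zero (k1 k2 k12 : ℝ) :
    cumulantWitness k1 k2 k12 {0} = k1 - k12 - k1 * k2 := by
  rw [cumulantWitness, if_neg (by decide), if_pos rfl]

lemma cumulantWitness_one (k1 k2 k12 : ℝ) :
    cumulantWitness k1 k2 k12 {1} = k2 - k12 - k1 * k2 := by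
  rw [cumulantWitness, if_neg (by decide), if_neg (by decide), if_pos rfl]

lemma cumulantWitness_univ (k1 k2 k12 : ℝ) :
    cumulantWitness k1 k2 k12 univ = k12 + k1 * k2 := by
  rw [cumulantWitness, if_neg (by decide), if_neg (by decide), if_neg (by decide)]

/-- semialgebraic description of the space of cumulants `𝒦₂`:
a triple `(k₁, k₂, k₁₂) ∈ ℝ³` is the cumulant vector of a probability distribution
on subsets of `{1,2}` if and only if `k₁₂ ≥ −k₁k₂`, `k₁₂ ≤ k₂(1−k₁)`,
`k₁₂ ≤ k₁(1−k₂)`, and `k₁₂ ≥ −(1−k₁)(1−k₂)`. -/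
theorem cumulant_space_two (k1 k2 k12 : ℝ) :
    (∃ p : Finset (Fin 2) → ℝ,
      (∀ I : Finset (Fin 2), 0 ≤ p I) ∧ (∑ I : Finset (Fin 2), p I = 1) ∧
      p {0} + p univ = k1 ∧ p {1} + p univ = k2 ∧
      p univ - (p {0} + p univ) * (p {1} + p univ) = k12) ↔
    (k12 ≥ -(k1 * k2) ∧ k12 ≤ k2 * (1 - k1) ∧ k12 ≤ k1 * (1 - k2) ∧
      k12 ≥ -((1 - k1) * (1 - k2))) := by
  constructor
  · rintro ⟨p, hnn, hsum, h1, h2, h12⟩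
    rw [sum_finset_fin_two] at hsum
    have h0 := hnn ∅
    have ha := hnn {0}
    have hb := hnn {1}
    have hu := hnn univ
    refine ⟨?_, ?_, ?_, ?_⟩ <;> nlinarith [mul_nonneg ha hb, mul_nonneg h0 hu]
  · rintro ⟨i1, i2, i3, i4⟩
    refine ⟨cumulantWitness k1 k2 k12, ?_, ?_, ?_, ?_, ?_⟩
    · intro I
      unfold cumulantWitness
      split_ifs <;> nlinarith
    · rw [sum_finset_fin_two, cumulantWitness_empty, cumulantWitness_zero,
        cumulantWitness_one, cumulantWitness_univ]
      ring
    · rw [cumulantWitness_zero, cumulantWitness_univ]; ring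
    · rw [cumulantWitness_one, cumulantWitness_univ]; ring
    · rw [cumulantWitness_zero, cumulantWitness_one, cumulantWitness_univ]; ring
end
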